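/- arXiv:2211.07253 — 2 statements merged into one kernel-verified Lean document; each statement's English description precedes it below -/
import Mathlib

section
/- Let x_n, x : [0,1] → ℝ be càdlàg functions with x_n → x in the Skorokhod sense, let 0 ≤ s < t ≤ 1 be such that x is continuous at s and at t, and let s_n → s, t_n → t with 0 ≤ s_n ≤ t_n ≤ 1. Then inf_{u ∈ [s_n, t_n]} x_n(u) → inf_{u ∈ [s,t]} x(u) as n → ∞. -/
open Filter Topology

/-- Left-limit value of a path on `[0,1]`, with the convention `x(0−) = x(0)`. -/
noncomputable def leftVal (x : ℝ → ℝ) (t : ℝ) : ℝ :=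
  if t ≤ 0 then x 0 else limUnder (nhdsWithin t (Set.Iio t)) x

/-- Jump `Δx(t) = x(t) − x(t−)`, with `Δx(0) = 0`. -/
noncomputable def jump (x : ℝ → ℝ) (t : ℝ) : ℝ :=
  if t ≤ 0 then 0 else x t - leftVal x t

/-- `x : [0,1] → ℝ` is càdlàg: right-continuous on `[0,1)`, left limits on `(0,1]`. -/
def Cadlag (x : ℝ → ℝ) : Prop :=
  (∀ t ∈ Set.Ico (0 : ℝ) 1, ContinuousWithinAt x (Set.Ici t) t) ∧
  (∀ t ∈ Set.Ioc (0 : ℝ) 1, ∃ L, Filter.Tendsto x (nhdsWithin t (Set.Iio t)) (nhds L))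

/-- `x n → y` in the Skorokhod sense on `[0,1]`: there are continuous strictly increasing
bijections `λ_n` of `[0,1]` with `sup |λ_n − id| → 0` and `sup |x n − y ∘ λ_n| → 0`. -/
def SkorokhodTendsto (x : ℕ → ℝ → ℝ) (y : ℝ → ℝ) : Prop :=
  ∃ lam : ℕ → ℝ → ℝ,
    (∀ n, ContinuousOn (lam n) (Set.Icc 0 1) ∧ StrictMonoOn (lam n) (Set.Icc 0 1) ∧
      lam n 0 = 0 ∧ lam n 1 = 1 ∧
      Set.MapsTo (lam n) (Set.Icc 0 1) (Set.Icc 0 1) ∧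
      Set.SurjOn (lam n) (Set.Icc 0 1) (Set.Icc 0 1)) ∧
    Filter.Tendsto (fun n => ⨆ t : Set.Icc (0 : ℝ) 1, |lam n (t : ℝ) - (t : ℝ)|)
      Filter.atTop (nhds 0) ∧
    Filter.Tendsto (fun n => ⨆ t : Set.Icc (0 : ℝ) 1, |x n (t : ℝ) - y (lam n (t : ℝ))|)
      Filter.atTop (nhds 0)

open Set

/-!
A càdlàg function is locally bounded (by its left and right limits), hence bounded on `[0,1]`, so
all the infima and suprema involved are genuine. Writing `λ_n` for the time changes,
`λ_n [s_n, t_n] = [λ_n s_n, λ_n t_n]`, so `inf_{[s_n, t_n]} x_n` is within `sup |x_n - x ∘ λ_n|`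
of `inf_{[λ_n s_n, λ_n t_n]} x`, and `λ_n s_n → s`, `λ_n t_n → t`. It remains to see that the
infimum of `x` over intervals `[a_n, b_n]` with `a_n → s`, `b_n → t` tends to its infimum over
`[s, t]`. Continuity of `x` at `s` and `t` gives both halves: the parts of `[a_n, b_n]` outside
`[s, t]` lie close to `s` or `t`, where `x` stays above `x(s) - ε` or `x(t) - ε`; and a value of
`x` at `s` or `t` is approximated by the values at `a_n` or `b_n`.
-/

namespace Cadlag

variable {y : ℝ → ℝ}

lemma exists_eventually_abs_le (h : Cadlag y) {x : ℝ} (hx : x ∈ Icc (0 : ℝ) 1) :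
    ∃ C, ∀ᶠ u in 𝓝[Icc 0 1] x, |y u| ≤ C := by
  obtain ⟨C₁, h₁⟩ : ∃ C, ∀ᶠ u in 𝓝[<] x, u ∈ Icc (0 : ℝ) 1 → |y u| ≤ C := by
    rcases hx.1.eq_or_lt with rfl | hx0
    · exact ⟨0, eventually_nhdsWithin_of_forall fun u hu hu' => absurd hu'.1 (not_le.2 hu)⟩
    · obtain ⟨L, hL⟩ := h.2 x ⟨hx0, hx.2⟩
      exact ⟨|L| + 1, (hL.abs.eventually (gt_mem_nhds (lt_add_one _))).mono fun u hu _ => hu.le⟩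
  obtain ⟨C₂, h₂⟩ : ∃ C, ∀ᶠ u in 𝓝[≥] x, u ∈ Icc (0 : ℝ) 1 → |y u| ≤ C := by
    rcases hx.2.eq_or_lt with rfl | hx1
    · exact ⟨|y 1|, eventually_nhdsWithin_of_forall fun u hu hu' => by
        rw [le_antisymm hu'.2 hu]⟩
    · exact ⟨|y x| + 1, ((h.1 x ⟨hx.1, hx1⟩).abs.eventually (gt_mem_nhds (lt_add_one _))).mono
        fun u hu _ => hu.le⟩
  refine ⟨max C₁ C₂, eventually_nhdsWithin_iff.2 ?_⟩
  rw [← nhdsLT_sup_nhdsGE, eventually_sup]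
  exact ⟨h₁.mono fun u hu hu' => le_max_of_le_left (hu hu'),
    h₂.mono fun u hu hu' => le_max_of_le_right (hu hu')⟩

lemma exists_abs_le (h : Cadlag y) : ∃ M, ∀ u ∈ Icc (0 : ℝ) 1, |y u| ≤ M :=
  isCompact_Icc.induction_on (p := fun S => ∃ M, ∀ u ∈ S, |y u| ≤ M) ⟨0, by simp⟩
    (fun _ _ hST ⟨M, hM⟩ => ⟨M, fun u hu => hM u (hST hu)⟩)
    (fun _ _ ⟨M₁, h₁⟩ ⟨M₂, h₂⟩ => ⟨max M₁ M₂, fun u hu => hu.elim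
      (fun hu => le_max_of_le_left (h₁ u hu)) (fun hu => le_max_of_le_right (h₂ u hu))⟩)
    (fun x hx => by
      obtain ⟨M, hM⟩ := h.exists_eventually_abs_le hx
      exact ⟨{u | |y u| ≤ M}, hM, M, fun _ hu => hu⟩)

end Cadlag

section IntervalInf

variable {ι : Type*} {l : Filter ι} {a b : ι → ℝ} {s t : ℝ} {y : ℝ → ℝ} {K : Set ℝ}

lemma eventually_Icc_subset_of_tendsto {S : Set ℝ} (hs : S ∈ 𝓝 s) (ht : S ∈ 𝓝 t)
    (hst : Icc s t ⊆ S) (ha : Tendsto a l (𝓝 s)) (hb : Tendsto b l (𝓝 t)) :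
    ∀ᶠ i in l, Icc (a i) (b i) ⊆ S := by
  obtain ⟨l₁, u₁, ⟨hl₁, hu₁⟩, hS₁⟩ := mem_nhds_iff_exists_Ioo_subset.1 hs
  obtain ⟨l₂, u₂, ⟨hl₂, hu₂⟩, hS₂⟩ := mem_nhds_iff_exists_Ioo_subset.1 ht
  filter_upwards [ha (Ioi_mem_nhds hl₁), hb (Iio_mem_nhds hu₂)] with i hai hbi v hv
  rcases lt_or_ge v s with hvs | hsv
  · exact hS₁ ⟨(mem_Ioi.1 hai).trans_le hv.1, hvs.trans hu₁⟩
  rcases le_or_gt v t with hvt | htv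
  · exact hst ⟨hsv, hvt⟩
  · exact hS₂ ⟨hl₂.trans htv, hv.2.trans_lt hbi⟩

lemma eventually_forall_mem_Icc_lt {c : ℝ} (hc : ∀ u ∈ Icc s t, c < y u) (hst : s ≤ t)
    (hcs : ContinuousWithinAt y K s) (hct : ContinuousWithinAt y K t)
    (habK : ∀ i, Icc (a i) (b i) ⊆ K) (ha : Tendsto a l (𝓝 s)) (hb : Tendsto b l (𝓝 t)) :
    ∀ᶠ i in l, ∀ u ∈ Icc (a i) (b i), c < y u := by
  have hnhds : ∀ {p}, p ∈ Icc s t → ContinuousWithinAt y K p → {u | u ∈ K → c < y u} ∈ 𝓝 p :=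
    fun hp hyp => eventually_nhdsWithin_iff.1 (hyp.eventually (lt_mem_nhds (hc _ hp)))
  filter_upwards [eventually_Icc_subset_of_tendsto (hnhds (left_mem_Icc.2 hst) hcs)
    (hnhds (right_mem_Icc.2 hst) hct) (fun u hu _ => hc u hu) ha hb] with i hi u hu
  exact hi hu (habK i hu)

lemma eventually_exists_mem_Icc_lt {c v : ℝ} (hv : v ∈ Icc s t) (hyv : y v < c)
    (hcs : ContinuousWithinAt y K s) (hct : ContinuousWithinAt y K t)
    (habK : ∀ i, Icc (a i) (b i) ⊆ K) (hab : ∀ i, a i ≤ b i)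
    (ha : Tendsto a l (𝓝 s)) (hb : Tendsto b l (𝓝 t)) :
    ∀ᶠ i in l, ∃ u ∈ Icc (a i) (b i), y u < c := by
  rcases hv.1.eq_or_lt with rfl | hsv
  · have hya := hcs.tendsto.comp (tendsto_nhdsWithin_iff.2
      ⟨ha, .of_forall fun i => habK i (left_mem_Icc.2 (hab i))⟩)
    filter_upwards [hya.eventually (gt_mem_nhds hyv)] with i hi
    exact ⟨a i, left_mem_Icc.2 (hab i), hi⟩
  rcases hv.2.eq_or_lt with rfl | hvt
  · have hyb := hct.tendsto.comp (tendsto_nhdsWithin_iff.2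
      ⟨hb, .of_forall fun i => habK i (right_mem_Icc.2 (hab i))⟩)
    filter_upwards [hyb.eventually (gt_mem_nhds hyv)] with i hi
    exact ⟨b i, right_mem_Icc.2 (hab i), hi⟩
  · filter_upwards [ha (Iio_mem_nhds hsv), hb (Ioi_mem_nhds hvt)] with i hai hbi
    exact ⟨v, ⟨le_of_lt hai, le_of_lt hbi⟩, hyv⟩

theorem tendsto_sInf_image_Icc (hK : BddBelow (y '' K)) (hsK : Icc s t ⊆ K) (hst : s ≤ t)
    (hcs : ContinuousWithinAt y K s) (hct : ContinuousWithinAt y K t)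
    (habK : ∀ i, Icc (a i) (b i) ⊆ K) (hab : ∀ i, a i ≤ b i)
    (ha : Tendsto a l (𝓝 s)) (hb : Tendsto b l (𝓝 t)) :
    Tendsto (fun i => sInf (y '' Icc (a i) (b i))) l (𝓝 (sInf (y '' Icc s t))) := by
  have hbdd : BddBelow (y '' Icc s t) := hK.mono (image_mono hsK)
  refine tendsto_order.2 ⟨fun c hc => ?_, fun c hc => ?_⟩
  · obtain ⟨c', hcc', hc'⟩ := exists_between hc
    filter_upwards [eventually_forall_mem_Icc_lt
      (fun u hu => hc'.trans_le (csInf_le hbdd (mem_image_of_mem y hu))) hst hcs hct habK ha hb]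
      with i hi
    exact hcc'.trans_le <| le_csInf ((nonempty_Icc.2 (hab i)).image y)
      (forall_mem_image.2 fun u hu => (hi u hu).le)
  · obtain ⟨_, ⟨v, hv, rfl⟩, hyv⟩ := exists_lt_of_csInf_lt ((nonempty_Icc.2 hst).image y) hc
    filter_upwards [eventually_exists_mem_Icc_lt hv hyv hcs hct habK hab ha hb]
      with i ⟨u, hu, hyu⟩
    exact (csInf_le (hK.mono (image_mono (habK i))) (mem_image_of_mem y hu)).trans_lt hyu

end IntervalInf

lemma csInf_image_le_csInf_image_add {α : Type*} {f g : α → ℝ} {S : Set α} {E : ℝ}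
    (hS : S.Nonempty) (hg : BddBelow (g '' S)) (h : ∀ u ∈ S, g u ≤ f u + E) :
    sInf (g '' S) ≤ sInf (f '' S) + E := by
  rw [← sub_le_iff_le_add]
  exact le_csInf (hS.image f) (forall_mem_image.2 fun u hu =>
    sub_le_iff_le_add.2 ((csInf_le hg (mem_image_of_mem g hu)).trans (h u hu)))

lemma dist_csInf_image_le {α : Type*} {f g : α → ℝ} {S : Set α} {E : ℝ}
    (hS : S.Nonempty) (hf : BddBelow (f '' S)) (hg : BddBelow (g '' S))
    (h : ∀ u ∈ S, |f u - g u| ≤ E) : dist (sInf (g '' S)) (sInf (f '' S)) ≤ E := by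
  rw [Real.dist_eq, abs_sub_le_iff]
  exact ⟨sub_le_iff_le_add'.2 <| csInf_image_le_csInf_image_add hS hg fun u hu =>
      sub_le_iff_le_add'.1 (abs_sub_le_iff.1 (h u hu)).2,
    sub_le_iff_le_add'.2 <| csInf_image_le_csInf_image_add hS hf fun u hu =>
      sub_le_iff_le_add'.1 (abs_sub_le_iff.1 (h u hu)).1⟩

lemma tendsto_apply_of_tendsto_iSup_abs_sub {ι : Type*} {l : Filter ι} {lam : ι → ℝ → ℝ}
    {r : ι → ℝ} {p : ℝ} (hmaps : ∀ i, MapsTo (lam i) (Icc 0 1) (Icc 0 1))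
    (hlam : Tendsto (fun i => ⨆ u : Icc (0 : ℝ) 1, |lam i u - u|) l (𝓝 0))
    (hr : ∀ i, r i ∈ Icc (0 : ℝ) 1) (hrp : Tendsto r l (𝓝 p)) :
    Tendsto (fun i => lam i (r i)) l (𝓝 p) := by
  refine hrp.congr_dist (squeeze_zero (fun _ => dist_nonneg) (fun i => ?_) hlam)
  rw [dist_comm, Real.dist_eq]
  exact le_ciSup_set (f := fun u => |lam i u - u|) ⟨1, forall_mem_image.2 fun u hu =>
    Real.dist_le_of_mem_Icc_01 (hmaps i hu) hu⟩ (hr i)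

lemma abs_sub_comp_le_iSup {f g lam : ℝ → ℝ} {A B u : ℝ} (hf : ∀ v ∈ Icc (0 : ℝ) 1, |f v| ≤ A)
    (hg : ∀ v ∈ Icc (0 : ℝ) 1, |g v| ≤ B) (hlam : MapsTo lam (Icc 0 1) (Icc 0 1))
    (hu : u ∈ Icc (0 : ℝ) 1) : |f u - g (lam u)| ≤ ⨆ v : Icc (0 : ℝ) 1, |f v - g (lam v)| :=
  le_ciSup_set (f := fun v => |f v - g (lam v)|) ⟨A + B, forall_mem_image.2 fun v hv =>
    (abs_sub _ _).trans (add_le_add (hf v hv) (hg _ (hlam hv)))⟩ hu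

/-- If `x n → y` in the Skorokhod sense, `0 ≤ s < t ≤ 1` with `y` continuous at `s` and
`t`, and `s_n → s`, `t_n → t` with `0 ≤ s_n ≤ t_n ≤ 1`, then
`inf_{[s_n,t_n]} x n → inf_{[s,t]} y`. -/
theorem stmt11 (x : ℕ → ℝ → ℝ) (y : ℝ → ℝ)
    (hxc : ∀ n, Cadlag (x n)) (hyc : Cadlag y)
    (hconv : SkorokhodTendsto x y)
    (s t : ℝ) (hs : 0 ≤ s) (hst : s < t) (ht : t ≤ 1)
    (hcs : ContinuousWithinAt y (Set.Icc 0 1) s)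
    (hct : ContinuousWithinAt y (Set.Icc 0 1) t)
    (sn tn : ℕ → ℝ) (hrange : ∀ n, 0 ≤ sn n ∧ sn n ≤ tn n ∧ tn n ≤ 1)
    (hsn : Filter.Tendsto sn Filter.atTop (nhds s))
    (htn : Filter.Tendsto tn Filter.atTop (nhds t)) :
    Filter.Tendsto (fun n => ⨅ u : Set.Icc (sn n) (tn n), x n (u : ℝ)) Filter.atTop
      (nhds (⨅ u : Set.Icc s t, y (u : ℝ))) := by
  obtain ⟨M, hM⟩ := hyc.exists_abs_le
  choose Mx hMx using fun n => (hxc n).exists_abs_le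
  obtain ⟨lam, hlam, hid, hdiff⟩ := hconv
  have hmaps n : MapsTo (lam n) (Icc 0 1) (Icc 0 1) := (hlam n).2.2.2.2.1
  have hbdd {f : ℝ → ℝ} {C : ℝ} (hC : ∀ u ∈ Icc (0 : ℝ) 1, |f u| ≤ C) {S : Set ℝ}
      (hS : S ⊆ Icc 0 1) : BddBelow (f '' S) :=
    ⟨-C, forall_mem_image.2 fun u hu => neg_le_of_abs_le (hC u (hS hu))⟩
  have hT n : Icc (sn n) (tn n) ⊆ Icc 0 1 := Icc_subset_Icc (hrange n).1 (hrange n).2.2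
  have hsnT n : sn n ∈ Icc (0 : ℝ) 1 := hT n (left_mem_Icc.2 (hrange n).2.1)
  have htnT n : tn n ∈ Icc (0 : ℝ) 1 := hT n (right_mem_Icc.2 (hrange n).2.1)
  have hlamT n : lam n '' Icc (sn n) (tn n) = Icc (lam n (sn n)) (lam n (tn n)) :=
    ((hlam n).1.mono (hT n)).image_Icc_of_monotoneOn (hrange n).2.1
      ((hlam n).2.1.monotoneOn.mono (hT n))
  have hA := tendsto_sInf_image_Icc (hbdd hM subset_rfl) (Icc_subset_Icc hs ht) hst.le hcs hct
    (fun n => hlamT n ▸ ((hmaps n).mono_left (hT n)).image_subset)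
    (fun n => (hlam n).2.1.monotoneOn (hsnT n) (htnT n) (hrange n).2.1)
    (tendsto_apply_of_tendsto_iSup_abs_sub hmaps hid hsnT hsn)
    (tendsto_apply_of_tendsto_iSup_abs_sub hmaps hid htnT htn)
  simp only [← sInf_image']
  refine hA.congr_dist (squeeze_zero (fun _ => dist_nonneg) (fun n => ?_) hdiff)
  rw [← hlamT, ← image_comp]
  refine dist_csInf_image_le (nonempty_Icc.2 (hrange n).2.1) (hbdd (hMx n) (hT n))
    (hbdd (fun u hu => hM _ (hmaps n hu)) (hT n)) fun u hu =>
      abs_sub_comp_le_iSup (hMx n) hM (hmaps n) (hT n hu)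
end

section
/- For a càdlàg function y : [0,1] → ℝ with y(0) = y(1) = 0, let ρ_y = inf{ t > 0 : min(y(t−), y(t)) = inf_{s∈[0,1]} y(s) } and define the Vervaat transform V(y) : [0,1] → ℝ by V(y)(t) = y((ρ_y + t) mod 1) − min(y(ρ_y−), y(ρ_y)) for 0 ≤ t < 1, and V(y)(1) = lim_{t↑1} V(y)(t). Suppose y_n, y : [0,1] → ℝ are càdlàg with y_n(0) = y_n(1) = 0 and y(0) = y(1) = 0, that y attains the value inf_{[0,1]} y (in the sense min(y(t−), y(t)) = inf y) at exactly one point ρ_y ∈ [0,1], that y is continuous at ρ_y, and that y_n → y in the Skorokhod sense. Then V(y_n) → V(y) in the Skorokhod sense. -/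
open Filter Topology

/-- The infimum of a path over `[0,1]`. -/
noncomputable def runMin01 (y : ℝ → ℝ) : ℝ := ⨅ s : Set.Icc (0 : ℝ) 1, y (s : ℝ)

/-- The first infimum point `ρ_y = inf{t > 0 : min(y(t−), y(t)) = inf_{[0,1]} y}`. -/
noncomputable def infPt (y : ℝ → ℝ) : ℝ :=
  sInf {t : ℝ | 0 < t ∧ min (leftVal y t) (y t) = runMin01 y}

/-- `V(y)(t)` for `t ∈ [0,1)`, with splitting point `ρ`:
`y((ρ+t) mod 1) − min(y(ρ−), y(ρ))`. -/
noncomputable def vervaatAux (y : ℝ → ℝ) (ρ : ℝ) (t : ℝ) : ℝ :=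
  (if ρ + t ≤ 1 then y (ρ + t) else y (ρ + t - 1)) - min (leftVal y ρ) (y ρ)

/-- The Vervaat transform, extended to `t = 1` by its left limit. -/
noncomputable def vervaat (y : ℝ → ℝ) : ℝ → ℝ := fun t =>
  if t < 1 then vervaatAux y (infPt y) t
  else limUnder (nhdsWithin 1 (Set.Iio 1)) (vervaatAux y (infPt y))

/-!
Since `t ↦ min (y (t−)) (y t)` is lower semicontinuous for a càdlàg `y`, the infimum of `y` is
attained, and when it is attained at a single point `ρ`, every near-minimiser lies near `ρ`. If
`yₙ ≈ y ∘ λₙ`, then `λₙ` sends the first infimum point `ρₙ` of `yₙ` to a near-minimiser of `y`,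
so `ρₙ → ρ`. Lifting `λₙ` to a homeomorphism `λ̃ₙ` of `ℝ` commuting with integer shifts, the
time change `t ↦ λ̃ₙ (ρₙ + t) - ρ` matches `V(yₙ)` with `V(y)` up to the errors of `yₙ ≈ y ∘ λₙ`
and of the minimum values, except near the ends of `[0,1]`, where we replace it by linear
pieces. There both transforms only see values of `y` near `ρ`, which are close to `inf y`
because `y` is continuous at `ρ`.
-/

open Set

lemma leftVal_zero (x : ℝ → ℝ) : leftVal x 0 = x 0 := if_pos le_rfl

lemma nhdsLT_le_nhdsWithin_Icc {t : ℝ} (ht : t ∈ Ioc (0 : ℝ) 1) : 𝓝[<] t ≤ 𝓝[Icc 0 1] t := by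
  rw [← nhdsWithin_Ioo_eq_nhdsLT ht.1]
  exact nhdsWithin_mono t fun u hu => ⟨hu.1.le, hu.2.le.trans ht.2⟩

lemma leftVal_eq_of_continuousWithinAt {x : ℝ → ℝ} {t : ℝ} (ht : t ∈ Ioc (0 : ℝ) 1)
    (h : ContinuousWithinAt x (Icc 0 1) t) : leftVal x t = x t := by
  rw [leftVal, if_neg (not_le.2 ht.1)]
  exact (h.tendsto.mono_left (nhdsLT_le_nhdsWithin_Icc ht)).limUnder_eq

lemma le_runMin01 {x : ℝ → ℝ} {c : ℝ} (h : ∀ t ∈ Icc (0 : ℝ) 1, c ≤ x t) : c ≤ runMin01 x :=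
  le_ciInf fun s => h s s.2

namespace Cadlag

variable {x : ℝ → ℝ}

lemma tendsto_leftVal (hx : Cadlag x) {t : ℝ} (ht : t ∈ Ioc (0 : ℝ) 1) :
    Tendsto x (𝓝[<] t) (𝓝 (leftVal x t)) := by
  obtain ⟨L, hL⟩ := hx.2 t ht
  rwa [leftVal, if_neg (not_le.2 ht.1), hL.limUnder_eq]

lemma leftVal_mem (hx : Cadlag x) {t : ℝ} (ht : t ∈ Icc (0 : ℝ) 1) {C : Set ℝ}
    (hC : IsClosed C) (h : ∀ᶠ u in 𝓝[Icc 0 1] t, x u ∈ C) : leftVal x t ∈ C := by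
  rcases ht.1.eq_or_lt with rfl | ht0
  · rw [leftVal_zero]
    exact h.self_of_nhdsWithin ht
  · exact hC.mem_of_tendsto (hx.tendsto_leftVal ⟨ht0, ht.2⟩)
      (h.filter_mono (nhdsLT_le_nhdsWithin_Icc ⟨ht0, ht.2⟩))

lemma eventually_lt (hx : Cadlag x) {t c : ℝ} (ht : t ∈ Icc (0 : ℝ) 1)
    (hc : c < min (leftVal x t) (x t)) : ∀ᶠ u in 𝓝[Icc 0 1] t, c < x u := by
  obtain ⟨hcL, hcx⟩ := lt_min_iff.1 hc
  rw [← Icc_union_Icc_eq_Icc ht.1 ht.2, nhdsWithin_union, eventually_sup]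
  constructor
  · rcases ht.1.eq_or_lt with rfl | ht0
    · rwa [Icc_self, nhdsWithin_singleton, eventually_pure]
    · rw [← Ico_insert_right ht0.le, nhdsWithin_insert, eventually_sup, eventually_pure]
      exact ⟨hcx, ((hx.tendsto_leftVal ⟨ht0, ht.2⟩).eventually_const_lt hcL).filter_mono
        (nhdsWithin_mono t Ico_subset_Iio_self)⟩
  · rcases ht.2.lt_or_eq with ht1 | rfl
    · exact ((hx.1 t ⟨ht.1, ht1⟩).eventually_const_lt hcx).filter_mono
        (nhdsWithin_mono t Icc_subset_Ici_self)
    · rwa [Icc_self, nhdsWithin_singleton, eventually_pure]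

lemma lowerSemicontinuousOn_min (hx : Cadlag x) :
    LowerSemicontinuousOn (fun t => min (leftVal x t) (x t)) (Icc 0 1) := by
  intro t ht c hc
  obtain ⟨c', hcc', hc'⟩ := exists_between hc
  filter_upwards [eventually_eventually_nhdsWithin.2 (hx.eventually_lt ht hc'),
    self_mem_nhdsWithin] with u hu huI
  exact hcc'.trans_le (le_min (hx.leftVal_mem huI isClosed_Ici (hu.mono fun _ => le_of_lt))
    (hu.self_of_nhdsWithin huI).le)

lemma exists_isMinOn (hx : Cadlag x) :
    ∃ t ∈ Icc (0 : ℝ) 1, IsMinOn (fun t => min (leftVal x t) (x t)) (Icc 0 1) t :=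
  hx.lowerSemicontinuousOn_min.exists_isMinOn (nonempty_Icc.2 zero_le_one) isCompact_Icc

lemma neg (hx : Cadlag x) : Cadlag fun t => -x t :=
  ⟨fun t ht => (hx.1 t ht).neg, fun t ht => let ⟨L, hL⟩ := hx.2 t ht; ⟨-L, hL.neg⟩⟩

lemma exists_le (hx : Cadlag x) : ∃ C, ∀ t ∈ Icc (0 : ℝ) 1, C ≤ x t := by
  obtain ⟨t₀, -, hmin⟩ := hx.exists_isMinOn
  exact ⟨_, fun t ht => (hmin ht).trans (min_le_right _ _)⟩

lemma exists_abs_le_s12 (hx : Cadlag x) : ∃ C, ∀ t ∈ Icc (0 : ℝ) 1, |x t| ≤ C := by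
  obtain ⟨C₁, h₁⟩ := hx.exists_le
  obtain ⟨C₂, h₂⟩ := hx.neg.exists_le
  refine ⟨max (-C₁) (-C₂), fun t ht => abs_le.2 ⟨?_, ?_⟩⟩
  · linarith [h₁ t ht, le_max_left (-C₁) (-C₂)]
  · linarith [h₂ t ht, le_max_right (-C₁) (-C₂)]

lemma runMin01_le (hx : Cadlag x) {t : ℝ} (ht : t ∈ Icc (0 : ℝ) 1) : runMin01 x ≤ x t := by
  obtain ⟨C, hC⟩ := hx.exists_le
  exact ciInf_le ⟨C, by rintro _ ⟨s, rfl⟩; exact hC s s.2⟩ (⟨t, ht⟩ : Icc (0 : ℝ) 1)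

lemma runMin01_le_leftVal (hx : Cadlag x) {t : ℝ} (ht : t ∈ Icc (0 : ℝ) 1) :
    runMin01 x ≤ leftVal x t :=
  hx.leftVal_mem ht isClosed_Ici (eventually_nhdsWithin_of_forall fun _ hu => hx.runMin01_le hu)

lemma runMin01_le_min (hx : Cadlag x) {t : ℝ} (ht : t ∈ Icc (0 : ℝ) 1) :
    runMin01 x ≤ min (leftVal x t) (x t) :=
  le_min (hx.runMin01_le_leftVal ht) (hx.runMin01_le ht)

lemma exists_min_eq_runMin01 (hx : Cadlag x) :
    ∃ t ∈ Icc (0 : ℝ) 1, min (leftVal x t) (x t) = runMin01 x := by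
  obtain ⟨t₀, ht₀, hmin⟩ := hx.exists_isMinOn
  exact ⟨t₀, ht₀, le_antisymm (le_runMin01 fun t ht => (hmin ht).trans (min_le_right _ _))
    (hx.runMin01_le_min ht₀)⟩

lemma infPt_mem (hx : Cadlag x) (h0 : runMin01 x < x 0) :
    infPt x ∈ Ioc (0 : ℝ) 1 ∧ min (leftVal x (infPt x)) (x (infPt x)) = runMin01 x := by
  set m := runMin01 x
  set C := Icc (0 : ℝ) 1 ∩ (fun t => min (leftVal x t) (x t)) ⁻¹' Iic m
  have hC : IsClosed C := by
    obtain ⟨v, hv, hCv⟩ := lowerSemicontinuousOn_iff_preimage_Iic.1 hx.lowerSemicontinuousOn_min m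
    change IsClosed (Icc 0 1 ∩ _)
    rw [hCv]
    exact isClosed_Icc.inter hv
  obtain ⟨t₀, ht₀, hmin₀⟩ := hx.exists_min_eq_runMin01
  have hbdd : BddBelow C := ⟨0, fun t ht => ht.1.1⟩
  have hι : sInf C ∈ C := hC.csInf_mem ⟨t₀, ht₀, hmin₀.le⟩ hbdd
  have hιmin : min (leftVal x (sInf C)) (x (sInf C)) = m :=
    le_antisymm hι.2 (hx.runMin01_le_min hι.1)
  have hι0 : 0 < sInf C := by
    refine hι.1.1.lt_of_ne fun h => h0.not_ge ?_
    rw [← hιmin, ← h, leftVal_zero, min_self]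
  have hleast : IsLeast {t : ℝ | 0 < t ∧ min (leftVal x t) (x t) = m} (sInf C) := by
    refine ⟨⟨hι0, hιmin⟩, fun t ht => ?_⟩
    rcases le_or_gt t 1 with ht1 | ht1
    · exact csInf_le hbdd ⟨⟨ht.1.le, ht1⟩, ht.2.le⟩
    · exact hι.1.2.trans ht1.le
  rw [infPt, hleast.csInf_eq]
  exact ⟨⟨hι0, hι.1.2⟩, hιmin⟩

lemma runMin01_lt_of_existsUnique (hx : Cadlag x) (hx01 : x 0 = x 1)
    (huniq : ∃! ρ, ρ ∈ Icc (0 : ℝ) 1 ∧ min (leftVal x ρ) (x ρ) = runMin01 x) :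
    runMin01 x < x 0 := by
  refine (hx.runMin01_le unitInterval.zero_mem).lt_of_ne fun h => zero_ne_one <|
    huniq.unique ⟨unitInterval.zero_mem, ?_⟩ ⟨unitInterval.one_mem, ?_⟩
  · rw [leftVal_zero, min_self, h]
  · rw [← hx01, ← h]
    exact min_eq_right (h ▸ hx.runMin01_le_leftVal unitInterval.one_mem)

lemma vervaat_one (hx : Cadlag x) (hρ : infPt x ∈ Ioc (0 : ℝ) 1) :
    vervaat x 1 = leftVal x (infPt x) - min (leftVal x (infPt x)) (x (infPt x)) := by
  rw [vervaat, if_neg (lt_irrefl 1)]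
  have hshift : Tendsto (fun s => infPt x + s - 1) (𝓝[<] 1) (𝓝[<] (infPt x)) := by
    refine tendsto_nhdsWithin_iff.2 ⟨?_, eventually_nhdsWithin_of_forall fun s hs => ?_⟩
    · have := (by fun_prop : Continuous fun s : ℝ => infPt x + s - 1).tendsto 1
      simpa using this.mono_left nhdsWithin_le_nhds
    · simp only [mem_Iio] at hs ⊢
      linarith
  refine ((((hx.tendsto_leftVal hρ).comp hshift).sub_const _).congr' ?_).limUnder_eq
  filter_upwards [Ioo_mem_nhdsLT (show 1 - infPt x < 1 by linarith [hρ.1])] with s hs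
  rw [vervaatAux, if_neg (by linarith [hs.1])]
  rfl

end Cadlag

lemma LowerSemicontinuousOn.exists_forall_dist_lt_of_le_add {α : Type*} [PseudoMetricSpace α]
    {s : Set α} {f : α → ℝ} {a : α} (hs : IsCompact s) (hf : LowerSemicontinuousOn f s)
    (ha : ∀ b ∈ s, f b ≤ f a → b = a) {e : ℝ} (he : 0 < e) :
    ∃ δ > 0, ∀ b ∈ s, f b ≤ f a + δ → dist b a < e := by
  set K := s ∩ {b | e ≤ dist b a}
  rcases K.eq_empty_or_nonempty with hK | hK
  · exact ⟨1, one_pos, fun b hb _ => not_le.1 fun hba => hK.subset ⟨hb, hba⟩⟩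
  obtain ⟨b₀, hb₀, hmin⟩ := (hf.mono inter_subset_left).exists_isMinOn hK
    (hs.inter_right (isClosed_le continuous_const (continuous_id.dist continuous_const)))
  have hgap : f a < f b₀ := not_le.1 fun h =>
    (ha b₀ hb₀.1 h ▸ hb₀.2 : e ≤ dist a a).not_gt (by rwa [dist_self])
  refine ⟨(f b₀ - f a) / 2, by linarith, fun b hb hfb => not_le.1 fun hba => ?_⟩
  linarith [isMinOn_iff.1 hmin b ⟨hb, hba⟩]

def IsTimeChange (l : ℝ → ℝ) : Prop :=
  ContinuousOn l (Set.Icc 0 1) ∧ StrictMonoOn l (Set.Icc 0 1) ∧ l 0 = 0 ∧ l 1 = 1 ∧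
    Set.MapsTo l (Set.Icc 0 1) (Set.Icc 0 1) ∧ Set.SurjOn l (Set.Icc 0 1) (Set.Icc 0 1)

namespace IsTimeChange

variable {l : ℝ → ℝ}

lemma continuousOn (hl : IsTimeChange l) : ContinuousOn l (Icc 0 1) := hl.1

lemma strictMonoOn (hl : IsTimeChange l) : StrictMonoOn l (Icc 0 1) := hl.2.1

lemma map_zero (hl : IsTimeChange l) : l 0 = 0 := hl.2.2.1

lemma map_one (hl : IsTimeChange l) : l 1 = 1 := hl.2.2.2.1

lemma mem_Icc (hl : IsTimeChange l) {t : ℝ} (ht : t ∈ Icc (0 : ℝ) 1) : l t ∈ Icc (0 : ℝ) 1 :=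
  hl.2.2.2.2.1 ht

lemma surjOn (hl : IsTimeChange l) : SurjOn l (Icc 0 1) (Icc 0 1) := hl.2.2.2.2.2

lemma lt_one (hl : IsTimeChange l) {t : ℝ} (ht : t ∈ Ico (0 : ℝ) 1) : l t < 1 :=
  hl.map_one ▸ hl.strictMonoOn (Ico_subset_Icc_self ht) unitInterval.one_mem ht.2

lemma of_strictMonoOn (hc : ContinuousOn l (Icc 0 1)) (hm : StrictMonoOn l (Icc 0 1))
    (h0 : l 0 = 0) (h1 : l 1 = 1) : IsTimeChange l := by
  refine ⟨hc, hm, h0, h1, fun t ht => ?_, ?_⟩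
  · exact ⟨h0 ▸ hm.monotoneOn unitInterval.zero_mem ht ht.1,
      h1 ▸ hm.monotoneOn ht unitInterval.one_mem ht.2⟩
  · have := intermediate_value_Icc zero_le_one hc
    rwa [h0, h1] at this

lemma id : IsTimeChange fun t => t :=
  of_strictMonoOn continuousOn_id (fun _ _ _ _ h => h) rfl rfl

end IsTimeChange

def SkorokhodNear (l x Y : ℝ → ℝ) (ε : ℝ) : Prop :=
  IsTimeChange l ∧ (∀ t ∈ Icc (0 : ℝ) 1, |l t - t| ≤ ε) ∧ ∀ t ∈ Icc (0 : ℝ) 1, |x t - Y (l t)| ≤ ε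

lemma SkorokhodNear.mono {l x Y : ℝ → ℝ} {ε ε' : ℝ} (h : SkorokhodNear l x Y ε) (hε : ε ≤ ε') :
    SkorokhodNear l x Y ε' :=
  ⟨h.1, fun t ht => (h.2.1 t ht).trans hε, fun t ht => (h.2.2 t ht).trans hε⟩

lemma exists_tendsto_zero_eventually {P : ℕ → ℝ → Prop}
    (hP : ∀ n ε ε', P n ε → ε ≤ ε' → P n ε') (h : ∀ ε > 0, ∀ᶠ n in atTop, P n ε) :
    ∃ e : ℕ → ℝ, Tendsto e atTop (𝓝 0) ∧ ∀ᶠ n in atTop, P n (e n) := by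
  set d : ℕ → ℝ := fun n => sInf {ε | 0 < ε ∧ P n ε}
  have hbdd : ∀ n, BddBelow {ε | 0 < ε ∧ P n ε} := fun n => ⟨0, fun ε hε => hε.1.le⟩
  refine ⟨fun n => d n + 1 / (n + 1), ?_, ?_⟩
  · have hd : Tendsto d atTop (𝓝 0) := by
      refine tendsto_order.2 ⟨fun a ha => Eventually.of_forall fun n =>
        ha.trans_le (Real.sInf_nonneg fun ε hε => hε.1.le), fun a ha => ?_⟩
      filter_upwards [h (a / 2) (by linarith)] with n hn
      exact (csInf_le (hbdd n) ⟨by linarith, hn⟩).trans_lt (by linarith)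
    simpa using hd.add tendsto_one_div_add_atTop_nhds_zero_nat
  · filter_upwards [h 1 one_pos] with n hn
    obtain ⟨ε, hε, hlt⟩ := exists_lt_of_csInf_lt (s := {ε | 0 < ε ∧ P n ε})
      ⟨1, one_pos, hn⟩ (lt_add_of_pos_right (d n) Nat.one_div_pos_of_nat)
    exact hP n ε _ hε.2 hlt.le

theorem skorokhodTendsto_of_eventually {x : ℕ → ℝ → ℝ} {Y : ℝ → ℝ}
    (h : ∀ ε > 0, ∀ᶠ n in atTop, ∃ l, SkorokhodNear l (x n) Y ε) : SkorokhodTendsto x Y := by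
  obtain ⟨e, he, hnear⟩ := exists_tendsto_zero_eventually
    (fun _ _ _ ⟨l, hl⟩ hε => ⟨l, hl.mono hε⟩) h
  have hsel : ∀ n, ∃ l, IsTimeChange l ∧
      ((∃ l, SkorokhodNear l (x n) Y (e n)) → SkorokhodNear l (x n) Y (e n)) := fun n => by
    by_cases hn : ∃ l, SkorokhodNear l (x n) Y (e n)
    · obtain ⟨l, hl⟩ := hn
      exact ⟨l, hl.1, fun _ => hl⟩
    · exact ⟨fun t => t, IsTimeChange.id, fun h => absurd h hn⟩
  choose lam hlam hlam_near using hsel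
  refine ⟨lam, hlam, ?_, ?_⟩ <;>
    refine squeeze_zero' (Eventually.of_forall fun n => Real.iSup_nonneg fun _ => abs_nonneg _)
      ?_ he <;>
    filter_upwards [hnear] with n hn
  exacts [ciSup_le fun t => (hlam_near n hn).2.1 t t.2,
    ciSup_le fun t => (hlam_near n hn).2.2 t t.2]

lemma le_iSup_Icc {f : ℝ → ℝ} {C : ℝ} (hC : ∀ s ∈ Icc (0 : ℝ) 1, f s ≤ C) {t : ℝ}
    (ht : t ∈ Icc (0 : ℝ) 1) : f t ≤ ⨆ s : Icc (0 : ℝ) 1, f s :=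
  le_ciSup (f := fun s : Icc (0 : ℝ) 1 => f s) ⟨C, by rintro _ ⟨s, rfl⟩; exact hC s s.2⟩ ⟨t, ht⟩

theorem SkorokhodTendsto.exists_eventually_skorokhodNear {x : ℕ → ℝ → ℝ} {Y : ℝ → ℝ}
    (hx : ∀ n, ∃ C, ∀ t ∈ Icc (0 : ℝ) 1, |x n t| ≤ C) (hY : ∃ C, ∀ t ∈ Icc (0 : ℝ) 1, |Y t| ≤ C)
    (h : SkorokhodTendsto x Y) :
    ∃ lam : ℕ → ℝ → ℝ, ∀ ε > 0, ∀ᶠ n in atTop, SkorokhodNear (lam n) (x n) Y ε := by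
  obtain ⟨lam, hlam, hA, hB⟩ := h
  obtain ⟨CY, hCY⟩ := hY
  refine ⟨lam, fun ε hε => ?_⟩
  filter_upwards [hA.eventually_lt_const hε, hB.eventually_lt_const hε] with n hAn hBn
  obtain ⟨Cx, hCx⟩ := hx n
  have hl : IsTimeChange (lam n) := hlam n
  refine ⟨hl, fun t ht => ?_, fun t ht => ?_⟩
  · refine (le_iSup_Icc (f := fun s => |lam n s - s|) (C := 1) (fun s hs => ?_) ht).trans hAn.le
    have := hl.mem_Icc hs
    exact abs_le.2 ⟨by linarith [hs.2, this.1], by linarith [hs.1, this.2]⟩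
  · refine (le_iSup_Icc (f := fun s => |x n s - Y (lam n s)|) (C := Cx + CY) (fun s hs => ?_)
      ht).trans hBn.le
    exact (abs_sub _ _).trans (add_le_add (hCx s hs) (hCY _ (hl.mem_Icc hs)))

section transfer

variable {x y Λ : ℝ → ℝ} {b : ℝ}

lemma abs_leftVal_sub_le (hx : Cadlag x) (hy : Cadlag y) (hΛ : IsTimeChange Λ)
    (hxy : ∀ t ∈ Icc (0 : ℝ) 1, |x t - y (Λ t)| ≤ b) {t : ℝ} (ht : t ∈ Icc (0 : ℝ) 1) :
    |leftVal x t - leftVal y (Λ t)| ≤ b := by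
  rcases ht.1.eq_or_lt with rfl | ht0
  · rw [hΛ.map_zero, leftVal_zero, leftVal_zero]
    simpa [hΛ.map_zero] using hxy 0 ht
  have ht' : t ∈ Ioc (0 : ℝ) 1 := ⟨ht0, ht.2⟩
  have hΛt : Λ t ∈ Ioc (0 : ℝ) 1 :=
    ⟨hΛ.map_zero ▸ hΛ.strictMonoOn unitInterval.zero_mem ht ht0, (hΛ.mem_Icc ht).2⟩
  have hIcc : ∀ᶠ u in 𝓝[<] t, u ∈ Icc (0 : ℝ) 1 :=
    nhdsLT_le_nhdsWithin_Icc ht' self_mem_nhdsWithin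
  have hΛlt : Tendsto Λ (𝓝[<] t) (𝓝[<] (Λ t)) := tendsto_nhdsWithin_iff.2
    ⟨(hΛ.continuousOn t ht).tendsto.mono_left (nhdsLT_le_nhdsWithin_Icc ht'), by
      filter_upwards [hIcc, self_mem_nhdsWithin] with u hu hut using hΛ.strictMonoOn hu ht hut⟩
  refine le_of_tendsto (((hx.tendsto_leftVal ht').sub
    ((hy.tendsto_leftVal hΛt).comp hΛlt)).abs) ?_
  filter_upwards [hIcc] with u hu using hxy u hu

lemma abs_min_leftVal_sub_le (hx : Cadlag x) (hy : Cadlag y) (hΛ : IsTimeChange Λ)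
    (hxy : ∀ t ∈ Icc (0 : ℝ) 1, |x t - y (Λ t)| ≤ b) {t : ℝ} (ht : t ∈ Icc (0 : ℝ) 1) :
    |min (leftVal x t) (x t) - min (leftVal y (Λ t)) (y (Λ t))| ≤ b :=
  (abs_min_sub_min_le_max _ _ _ _).trans
    (max_le (abs_leftVal_sub_le hx hy hΛ hxy ht) (hxy t ht))

lemma abs_runMin01_sub_le (hx : Cadlag x) (hy : Cadlag y) (hΛ : IsTimeChange Λ)
    (hxy : ∀ t ∈ Icc (0 : ℝ) 1, |x t - y (Λ t)| ≤ b) : |runMin01 x - runMin01 y| ≤ b := by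
  have hlo : runMin01 y - b ≤ runMin01 x := le_runMin01 fun t ht => by
    linarith [(abs_le.1 (hxy t ht)).1, hy.runMin01_le (hΛ.mem_Icc ht)]
  have hhi : runMin01 x - b ≤ runMin01 y := le_runMin01 fun s hs => by
    obtain ⟨t, ht, rfl⟩ := hΛ.surjOn hs
    linarith [(abs_le.1 (hxy t ht)).2, hx.runMin01_le ht]
  exact abs_le.2 ⟨by linarith, by linarith⟩

end transfer

lemma abs_fract_sub_lt {s ρ δ : ℝ} (k : ℤ) (h : |s - k - ρ| < δ) (hρ : δ ≤ ρ)
    (hρ1 : ρ + δ ≤ 1) : |Int.fract s - ρ| < δ := by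
  have := abs_lt.1 h
  rwa [(Int.fract_eq_iff (b := s - k)).2 ⟨by linarith, by linarith, k, by ring⟩]

/-- The lift `n + u ↦ n + Λ u` (`n ∈ ℤ`, `u ∈ [0,1)`) of the circle map induced by `Λ`, written
so that its continuity is an instance of `ContinuousOn.comp_fract''`. -/
noncomputable def circleLift (Λ : ℝ → ℝ) (s : ℝ) : ℝ :=
  s + (Λ (Int.fract s) - Int.fract s)

lemma circleLift_eq (Λ : ℝ → ℝ) (s : ℝ) : circleLift Λ s = ⌊s⌋ + Λ (Int.fract s) := by
  have := Int.floor_add_fract s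
  rw [circleLift]
  linarith

lemma abs_circleLift_sub_le {Λ : ℝ → ℝ} {η : ℝ} (hΛ : ∀ t ∈ Icc (0 : ℝ) 1, |Λ t - t| ≤ η)
    (s : ℝ) : |circleLift Λ s - s| ≤ η := by
  rw [circleLift, add_sub_cancel_left]
  exact hΛ _ (unitInterval.fract_mem s)

namespace IsTimeChange

variable {Λ : ℝ → ℝ}

lemma continuous_circleLift (hΛ : IsTimeChange Λ) : Continuous (circleLift Λ) :=
  continuous_id.add <| (hΛ.continuousOn.sub continuousOn_id).comp_fract'' <| by
    simp [hΛ.map_zero, hΛ.map_one]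

lemma fract_circleLift (hΛ : IsTimeChange Λ) (s : ℝ) :
    Int.fract (circleLift Λ s) = Λ (Int.fract s) := by
  rw [circleLift_eq, Int.fract_intCast_add, Int.fract_eq_self]
  exact ⟨(hΛ.mem_Icc (unitInterval.fract_mem s)).1,
    hΛ.lt_one ⟨Int.fract_nonneg s, Int.fract_lt_one s⟩⟩

lemma strictMono_circleLift (hΛ : IsTimeChange Λ) : StrictMono (circleLift Λ) := by
  intro s s' hss'
  simp only [circleLift_eq]
  rcases (Int.floor_mono hss'.le).eq_or_lt with h | h
  · have hfract : Int.fract s < Int.fract s' := by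
      rw [← Int.self_sub_floor, ← Int.self_sub_floor, h]
      linarith
    rw [h]
    linarith [hΛ.strictMonoOn (unitInterval.fract_mem s) (unitInterval.fract_mem s') hfract]
  · have h1 : (⌊s⌋ : ℝ) + 1 ≤ ⌊s'⌋ := by exact_mod_cast h
    linarith [hΛ.lt_one ⟨Int.fract_nonneg s, Int.fract_lt_one s⟩,
      (hΛ.mem_Icc (unitInterval.fract_mem s')).1]

end IsTimeChange

noncomputable def patchEnds (g : ℝ → ℝ) (t₁ t₂ t : ℝ) : ℝ :=
  if t ≤ t₁ then g t₁ / t₁ * t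
  else if t ≤ t₂ then g t else g t₂ + (1 - g t₂) / (1 - t₂) * (t - t₂)

section patchEnds

variable {g : ℝ → ℝ} {t₁ t₂ t : ℝ}

lemma patchEnds_of_le (ht : t ≤ t₁) : patchEnds g t₁ t₂ t = g t₁ / t₁ * t := if_pos ht

lemma patchEnds_of_mem (h₁ : 0 < t₁) (ht : t ∈ Icc t₁ t₂) : patchEnds g t₁ t₂ t = g t := by
  rcases ht.1.eq_or_lt with rfl | h
  · rw [patchEnds_of_le le_rfl, div_mul_cancel₀ _ h₁.ne']
  · rw [patchEnds, if_neg h.not_ge, if_pos ht.2]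

lemma patchEnds_of_ge (h₁₂ : t₁ < t₂) (ht : t₂ ≤ t) :
    patchEnds g t₁ t₂ t = g t₂ + (1 - g t₂) / (1 - t₂) * (t - t₂) := by
  rcases ht.eq_or_lt with rfl | h
  · rw [patchEnds, if_neg h₁₂.not_ge, if_pos le_rfl]
    ring
  · rw [patchEnds, if_neg (h₁₂.trans h).not_ge, if_neg h.not_ge]

lemma isTimeChange_patchEnds (h₁ : 0 < t₁) (h₁₂ : t₁ < t₂) (h₂ : t₂ < 1) (hg : Continuous g)
    (hgm : StrictMonoOn g (Icc t₁ t₂)) (hg₁ : 0 < g t₁) (hg₂ : g t₂ < 1) :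
    IsTimeChange (patchEnds g t₁ t₂) := by
  have hc : Continuous (patchEnds g t₁ t₂) := by
    refine Continuous.if_le (by fun_prop)
      (Continuous.if_le hg (by fun_prop) continuous_id continuous_const fun t ht => ?_)
      continuous_id continuous_const fun t ht => ?_
    · rw [ht]
      ring
    · rw [ht, if_pos h₁₂.le, div_mul_cancel₀ _ h₁.ne']
  have hm₁ : StrictMonoOn (patchEnds g t₁ t₂) (Icc 0 t₁) := fun s hs t ht hst => by
    rw [patchEnds_of_le hs.2, patchEnds_of_le ht.2]
    exact mul_lt_mul_of_pos_left hst (div_pos hg₁ h₁)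
  have hm₂ : StrictMonoOn (patchEnds g t₁ t₂) (Icc t₁ t₂) := fun s hs t ht hst => by
    rw [patchEnds_of_mem h₁ hs, patchEnds_of_mem h₁ ht]
    exact hgm hs ht hst
  have hm₃ : StrictMonoOn (patchEnds g t₁ t₂) (Icc t₂ 1) := fun s hs t ht hst => by
    rw [patchEnds_of_ge h₁₂ hs.1, patchEnds_of_ge h₁₂ ht.1]
    have := mul_lt_mul_of_pos_left (sub_lt_sub_right hst t₂)
      (div_pos (sub_pos.2 hg₂) (sub_pos.2 h₂))
    linarith
  have hm₂₃ : StrictMonoOn (patchEnds g t₁ t₂) (Icc t₁ 1) := by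
    rw [← Icc_union_Icc_eq_Icc h₁₂.le h₂.le]
    exact hm₂.union hm₃ (isGreatest_Icc h₁₂.le) (isLeast_Icc h₂.le)
  refine IsTimeChange.of_strictMonoOn hc.continuousOn ?_ (by rw [patchEnds_of_le h₁.le]; ring)
    (by rw [patchEnds_of_ge h₁₂ h₂.le, div_mul_cancel₀ _ (sub_pos.2 h₂).ne']; ring)
  rw [← Icc_union_Icc_eq_Icc h₁.le (h₁₂.trans h₂).le]
  exact hm₁.union hm₂₃ (isGreatest_Icc h₁.le) (isLeast_Icc (h₁₂.trans h₂).le)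

end patchEnds

/-- `μ` is `t ↦ circleLift Λ (ρ' + t) - ρ` on `[γ/2, 1 - γ/2]`, patched linearly near the ends
of `[0,1]`. -/
theorem IsTimeChange.exists_rotate {Λ : ℝ → ℝ} (hΛ : IsTimeChange Λ) {γ ρ ρ' : ℝ}
    (hγ : 0 < γ) (hγρ : γ ≤ ρ) (hγρ1 : ρ + γ ≤ 1) (hΛγ : ∀ t ∈ Icc (0 : ℝ) 1, |Λ t - t| ≤ γ / 8)
    (hρ' : |ρ' - ρ| ≤ γ / 4) :
    ∃ μ, IsTimeChange μ ∧ ∀ t ∈ Icc (0 : ℝ) 1, |μ t - t| ≤ γ ∧ (t < 1 →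
      Int.fract (ρ + μ t) = Λ (Int.fract (ρ' + t)) ∨
        |Λ (Int.fract (ρ' + t)) - ρ| < γ ∧ |Int.fract (ρ + μ t) - ρ| < γ) := by
  have hL : ∀ s, |circleLift Λ s - s| ≤ γ / 8 := abs_circleLift_sub_le hΛγ
  set g : ℝ → ℝ := fun t => circleLift Λ (ρ' + t) - ρ
  have hgm : StrictMono g := fun s t hst =>
    sub_lt_sub_right (hΛ.strictMono_circleLift (by linarith)) ρ
  have hρρ' := abs_le.1 hρ'
  have hg₁ := abs_le.1 (hL (ρ' + γ / 2))
  have hg₂ := abs_le.1 (hL (ρ' + (1 - γ / 2)))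
  set μ := patchEnds g (γ / 2) (1 - γ / 2)
  have hμ : IsTimeChange μ := isTimeChange_patchEnds (by linarith) (by linarith) (by linarith)
    ((hΛ.continuous_circleLift.comp (by fun_prop)).sub continuous_const) (hgm.strictMonoOn _)
    (by simp only [g]; linarith) (by simp only [g]; linarith)
  have hμmono := hμ.strictMonoOn.monotoneOn
  have hμ₁ : μ (γ / 2) = g (γ / 2) := patchEnds_of_mem (by linarith) ⟨le_rfl, by linarith⟩
  have hμ₂ : μ (1 - γ / 2) = g (1 - γ / 2) := patchEnds_of_mem (by linarith) ⟨by linarith, le_rfl⟩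
  refine ⟨μ, hμ, fun t ht => ?_⟩
  have hLt := abs_le.1 (hL (ρ' + t))
  have ⟨ht0, ht1⟩ := ht
  rcases le_or_gt t (γ / 2) with h₁ | h₁
  · have hμ0 : 0 ≤ μ t := hμ.map_zero ▸ hμmono unitInterval.zero_mem ht ht.1
    have hμt : μ t ≤ g (γ / 2) := hμ₁ ▸ hμmono ht ⟨by linarith, by linarith⟩ h₁
    simp only [g] at hμt
    refine ⟨abs_le.2 ⟨by linarith, by linarith⟩, fun _ => Or.inr ⟨?_, ?_⟩⟩
    · rw [← hΛ.fract_circleLift]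
      refine abs_fract_sub_lt 0 (abs_lt.2 ⟨?_, ?_⟩) hγρ hγρ1 <;> push_cast <;> linarith
    · refine abs_fract_sub_lt 0 (abs_lt.2 ⟨?_, ?_⟩) hγρ hγρ1 <;> push_cast <;> linarith
  rcases le_or_gt t (1 - γ / 2) with h₂ | h₂
  · have hμt : μ t = g t := patchEnds_of_mem (by linarith) ⟨h₁.le, h₂⟩
    refine ⟨?_, fun _ => Or.inl ?_⟩
    · rw [hμt]
      exact abs_le.2 ⟨by linarith, by linarith⟩
    · rw [hμt, add_sub_cancel, hΛ.fract_circleLift]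
  · have hμ1 : μ t ≤ 1 := hμ.map_one ▸ hμmono ht unitInterval.one_mem ht.2
    have hμt : g (1 - γ / 2) ≤ μ t := hμ₂ ▸ hμmono ⟨by linarith, by linarith⟩ ht h₂.le
    simp only [g] at hμt
    refine ⟨abs_le.2 ⟨by linarith, by linarith⟩, fun _ => Or.inr ⟨?_, ?_⟩⟩
    · rw [← hΛ.fract_circleLift]
      refine abs_fract_sub_lt 1 (abs_lt.2 ⟨?_, ?_⟩) hγρ hγρ1 <;> push_cast <;> linarith
    · refine abs_fract_sub_lt 1 (abs_lt.2 ⟨?_, ?_⟩) hγρ hγρ1 <;> push_cast <;> linarith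

lemma vervaat_of_lt {x : ℝ → ℝ} (hx01 : x 0 = x 1) (hρ : infPt x ∈ Icc (0 : ℝ) 1) {t : ℝ}
    (ht : t ∈ Ico (0 : ℝ) 1) :
    vervaat x t = x (Int.fract (infPt x + t)) - min (leftVal x (infPt x)) (x (infPt x)) := by
  rw [vervaat, if_pos ht.2, vervaatAux]
  congr 1
  split_ifs with h
  · rcases h.lt_or_eq with h | h
    · rw [Int.fract_eq_self.2 ⟨by linarith [hρ.1, ht.1], h⟩]
    · rw [h, Int.fract_one, hx01]
  · rw [(Int.fract_eq_iff (b := infPt x + t - 1)).2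
      ⟨by linarith, by linarith [hρ.2, ht.2], 1, by push_cast; ring⟩]

lemma ContinuousWithinAt.exists_pos_abs_sub_le {y : ℝ → ℝ} {ρ : ℝ}
    (h : ContinuousWithinAt y (Icc 0 1) ρ) (hρ : ρ ∈ Ioo (0 : ℝ) 1) {ε : ℝ} (hε : 0 < ε) :
    ∃ γ > 0, γ ≤ ε ∧ γ ≤ ρ ∧ ρ + γ ≤ 1 ∧
      ∀ u ∈ Icc (0 : ℝ) 1, |u - ρ| < γ → |y u - y ρ| ≤ ε := by
  obtain ⟨γ₀, hγ₀, hwin⟩ := Metric.continuousWithinAt_iff.1 h ε hε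
  refine ⟨min (min γ₀ ε) (min ρ (1 - ρ)), lt_min (lt_min hγ₀ hε) (lt_min hρ.1 (sub_pos.2 hρ.2)),
    by simp, by simp, le_sub_iff_add_le'.1 (by simp), fun u hu hu' => ?_⟩
  have := hwin hu (by rw [Real.dist_eq]; exact hu'.trans_le (by simp))
  rw [Real.dist_eq] at this
  exact this.le

lemma Cadlag.exists_forall_abs_sub_lt {y : ℝ → ℝ} (hy : Cadlag y)
    (huniq : ∃! ρ, ρ ∈ Icc (0 : ℝ) 1 ∧ min (leftVal y ρ) (y ρ) = runMin01 y) {ρ : ℝ}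
    (hρ : ρ ∈ Icc (0 : ℝ) 1) (hρmin : min (leftVal y ρ) (y ρ) = runMin01 y) {e : ℝ}
    (he : 0 < e) :
    ∃ δ > 0, ∀ s ∈ Icc (0 : ℝ) 1,
      min (leftVal y s) (y s) ≤ runMin01 y + δ → |s - ρ| < e := by
  obtain ⟨δ, hδ, hsep⟩ := hy.lowerSemicontinuousOn_min.exists_forall_dist_lt_of_le_add
    isCompact_Icc (fun s hs hle => huniq.unique
      ⟨hs, le_antisymm (hρmin ▸ hle) (hy.runMin01_le_min hs)⟩ ⟨hρ, hρmin⟩) he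
  exact ⟨δ, hδ, fun s hs h => by simpa only [Real.dist_eq] using hsep s hs (by rwa [hρmin])⟩

lemma SkorokhodNear.abs_infPt_sub_lt {x y Λ : ℝ → ℝ} (hx : Cadlag x) (hy : Cadlag y)
    {b δ e : ℝ} (hΛ : SkorokhodNear Λ x y b)
    (hsep : ∀ s ∈ Icc (0 : ℝ) 1,
      min (leftVal y s) (y s) ≤ runMin01 y + δ → |s - infPt y| < e)
    (hbδ : b ≤ δ / 2) (hb0 : b < (y 0 - runMin01 y) / 2) :
    infPt x ∈ Ioc (0 : ℝ) 1 ∧ min (leftVal x (infPt x)) (x (infPt x)) = runMin01 x ∧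
      |Λ (infPt x) - infPt y| < e := by
  obtain ⟨hΛ, -, hxy⟩ := hΛ
  have hmin := abs_le.1 (abs_runMin01_sub_le hx hy hΛ hxy)
  have hx0 : runMin01 x < x 0 := by
    have := abs_le.1 (hxy 0 unitInterval.zero_mem)
    rw [hΛ.map_zero] at this
    linarith
  obtain ⟨hρ'I, hρ'min⟩ := hx.infPt_mem hx0
  refine ⟨hρ'I, hρ'min, hsep _ (hΛ.mem_Icc (Ioc_subset_Icc_self hρ'I)) ?_⟩
  have := abs_le.1 (abs_min_leftVal_sub_le hx hy hΛ hxy (Ioc_subset_Icc_self hρ'I))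
  linarith

theorem exists_skorokhodNear_vervaat {x y Λ : ℝ → ℝ} (hx : Cadlag x) (hy : Cadlag y)
    (hx01 : x 0 = x 1) (hy01 : y 0 = y 1)
    (hLρ : leftVal y (infPt y) = runMin01 y) (hyρ : y (infPt y) = runMin01 y)
    {γ δ ε b : ℝ} (hγ : 0 < γ) (hγρ : γ ≤ infPt y) (hγρ1 : infPt y + γ ≤ 1)
    (hwin : ∀ u ∈ Icc (0 : ℝ) 1, |u - infPt y| < γ → |y u - y (infPt y)| ≤ ε)
    (hsep : ∀ s ∈ Icc (0 : ℝ) 1,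
      min (leftVal y s) (y s) ≤ runMin01 y + δ → |s - infPt y| < γ / 8)
    (hΛ : SkorokhodNear Λ x y b) (hbγ : b ≤ γ / 8) (hbδ : b ≤ δ / 2)
    (hb0 : b < (y 0 - runMin01 y) / 2) :
    ∃ μ, SkorokhodNear μ (vervaat x) (vervaat y) (max γ (2 * b + 2 * ε)) := by
  rw [hyρ] at hwin
  obtain ⟨hρ'I, hρ'min, hΛρ'⟩ := hΛ.abs_infPt_sub_lt hx hy hsep hbδ hb0
  obtain ⟨hΛ, hΛt, hxy⟩ := hΛ
  have hmin := abs_le.1 (abs_runMin01_sub_le hx hy hΛ hxy)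
  have hρ'Icc := Ioc_subset_Icc_self hρ'I
  have hρ'ρ : |infPt x - infPt y| ≤ γ / 4 := by
    have := abs_le.1 (hΛt _ hρ'Icc)
    have := abs_lt.1 hΛρ'
    exact abs_le.2 ⟨by linarith, by linarith⟩
  obtain ⟨μ, hμ, hμt⟩ :=
    hΛ.exists_rotate hγ hγρ hγρ1 (fun t ht => (hΛt t ht).trans hbγ) hρ'ρ
  have hρI : infPt y ∈ Ioc (0 : ℝ) 1 := ⟨by linarith, by linarith⟩
  have hε : 0 ≤ ε := (abs_nonneg _).trans (hwin _ (Ioc_subset_Icc_self hρI) (by simpa using hγ))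
  refine ⟨μ, hμ, fun t ht => (hμt t ht).1.trans (le_max_left _ _),
    fun t ht => (?_ : _ ≤ 2 * b + 2 * ε).trans (le_max_right _ _)⟩
  rcases ht.2.lt_or_eq with ht1 | rfl
  · rw [vervaat_of_lt hx01 hρ'Icc ⟨ht.1, ht1⟩, vervaat_of_lt hy01 (Ioc_subset_Icc_self hρI)
      ⟨(hμ.mem_Icc ht).1, hμ.lt_one ⟨ht.1, ht1⟩⟩, hρ'min, hLρ, hyρ, min_self]
    have hu := abs_le.1 (hxy _ (unitInterval.fract_mem (infPt x + t)))
    rcases (hμt t ht).2 ht1 with heq | ⟨hnear, hnear'⟩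
    · rw [heq]
      exact abs_le.2 ⟨by linarith, by linarith⟩
    · have h₁ := abs_le.1 (hwin _ (hΛ.mem_Icc (unitInterval.fract_mem _)) hnear)
      have h₂ := abs_le.1 (hwin _ (unitInterval.fract_mem _) hnear')
      exact abs_le.2 ⟨by linarith, by linarith⟩
  · rw [hμ.map_one, hx.vervaat_one hρ'I, hy.vervaat_one hρI, hρ'min, hLρ, hyρ, min_self,
      sub_self, sub_zero]
    have hnhds : ∀ᶠ u in 𝓝 (Λ (infPt x)), |u - infPt y| < γ :=
      (isOpen_lt (by fun_prop) continuous_const).mem_nhds (hΛρ'.trans (by linarith))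
    have hLy : leftVal y (Λ (infPt x)) ≤ runMin01 y + ε :=
      hy.leftVal_mem (hΛ.mem_Icc hρ'Icc) isClosed_Iic <| by
        filter_upwards [nhdsWithin_le_nhds hnhds, self_mem_nhdsWithin] with u hu huI
        exact mem_Iic.2 (by linarith [(abs_le.1 (hwin u huI hu)).2])
    have hLx := abs_le.1 (abs_leftVal_sub_le hx hy hΛ hxy hρ'Icc)
    have hLx' := hx.runMin01_le_leftVal hρ'Icc
    exact abs_le.2 ⟨by linarith, by linarith⟩

/-- If `y_n → y` in the Skorokhod sense, `y_n(0) = y_n(1) = 0 = y(0) = y(1)`, `y` attains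
its infimum (in the sense `min(y(t−), y(t)) = inf y`) at exactly one point, and `y` is
continuous at that point, then `V(y_n) → V(y)` in the Skorokhod sense. -/
theorem stmt12 (yn : ℕ → ℝ → ℝ) (y : ℝ → ℝ)
    (hync : ∀ n, Cadlag (yn n)) (hyc : Cadlag y)
    (h0n : ∀ n, yn n 0 = 0 ∧ yn n 1 = 0) (h0 : y 0 = 0 ∧ y 1 = 0)
    (huniq : ∃! ρ, ρ ∈ Set.Icc (0 : ℝ) 1 ∧ min (leftVal y ρ) (y ρ) = runMin01 y)
    (hcont : ContinuousWithinAt y (Set.Icc 0 1) (infPt y))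
    (hconv : SkorokhodTendsto yn y) :
    SkorokhodTendsto (fun n => vervaat (yn n)) (vervaat y) := by
  have hm := hyc.runMin01_lt_of_existsUnique (h0.1.trans h0.2.symm) huniq
  obtain ⟨hρ, hρmin⟩ := hyc.infPt_mem hm
  have hLρ := leftVal_eq_of_continuousWithinAt hρ hcont
  have hyρ : y (infPt y) = runMin01 y := by rwa [hLρ, min_self] at hρmin
  have hρ1 : infPt y < 1 := hρ.2.lt_of_ne fun h => by rw [h, h0.2, ← h0.1] at hyρ; linarith
  obtain ⟨lam, hlam⟩ := hconv.exists_eventually_skorokhodNear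
    (fun n => (hync n).exists_abs_le_s12) hyc.exists_abs_le_s12
  refine skorokhodTendsto_of_eventually fun ε hε => ?_
  obtain ⟨γ, hγ, hγε, hγρ, hγρ1, hwin⟩ :=
    hcont.exists_pos_abs_sub_le ⟨hρ.1, hρ1⟩ (by positivity : 0 < ε / 4)
  obtain ⟨δ, hδ, hsep⟩ := hyc.exists_forall_abs_sub_lt huniq (Ioc_subset_Icc_self hρ) hρmin
    (by positivity : 0 < γ / 8)
  obtain ⟨κ, hκ, hκγ, hκδ, hκm⟩ : ∃ κ > 0, κ ≤ γ / 8 ∧ κ ≤ δ / 2 ∧ κ ≤ (y 0 - runMin01 y) / 3 :=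
    ⟨min (γ / 8) (min (δ / 2) ((y 0 - runMin01 y) / 3)),
      lt_min (by positivity) (lt_min (by positivity) (by linarith)), by simp, by simp, by simp⟩
  filter_upwards [hlam κ hκ] with n hn
  obtain ⟨μ, hμ⟩ := exists_skorokhodNear_vervaat (hync n) hyc ((h0n n).1.trans (h0n n).2.symm)
    (h0.1.trans h0.2.symm) (hLρ.trans hyρ) hyρ hγ hγρ hγρ1 hwin hsep hn hκγ hκδ (by linarith)
  exact ⟨μ, hμ.mono (max_le (by linarith) (by linarith))⟩
end
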